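/- On (ℂ²)^⊗3, let G₁ = U(π/4)₁₂ · U(π/4)₂₃ · U(3π/4)₁₂ · U(3π/4)₂₃, where U(θ)_{ij} = cos θ·I + i sin θ·SWAP_{ij}. Then the characteristic polynomial of the 8×8 matrix G₁ is (x−1)⁴·(x² − (5/4)x + 1)²; in particular G₁ is unitary with determinant 1, its eigenvalues are 1 (multiplicity 4) and e^{±iφ} (each with multiplicity 2) where cos φ = 5/8, and it acts trivially on the spin-3/2 (totally symmetric) sector. -/

import Mathlib

open Matrix Complex

noncomputable section

/-- The SWAP of tensor factors `i` and `j` on `(ℂ²)^⊗n`. -/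
def swapM (n : ℕ) (i j : Fin n) : Matrix (Fin n → Fin 2) (Fin n → Fin 2) ℂ :=
  fun x y => if x = y ∘ Equiv.swap i j then 1 else 0

/-- The exchange gate `U(θ)_{ij} = exp(iθ·SWAP_{ij}) = cos θ·I + i sin θ·SWAP_{ij}`. -/
def exch (n : ℕ) (θ : ℝ) (i j : Fin n) : Matrix (Fin n → Fin 2) (Fin n → Fin 2) ℂ :=
  (Real.cos θ : ℂ) • (1 : Matrix (Fin n → Fin 2) (Fin n → Fin 2) ℂ)
    + (Complex.I * (Real.sin θ : ℂ)) • swapM n i j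

/-- The generator `G₁ = U(π/4)₁₂ · U(π/4)₂₃ · U(3π/4)₁₂ · U(3π/4)₂₃` on three qubits. -/
def G₁ : Matrix (Fin 3 → Fin 2) (Fin 3 → Fin 2) ℂ :=
  exch 3 (Real.pi / 4) 0 1 * exch 3 (Real.pi / 4) 1 2 *
    exch 3 (3 * Real.pi / 4) 0 1 * exch 3 (3 * Real.pi / 4) 1 2

/-! The SWAPs `A = SWAP₁₂` and `B = SWAP₂₃` are involutions satisfying the braid relation
`ABA = BAB`. Since `U(π/4) = (1 + iS)/√2` and `U(3π/4) = (-1 + iS)/√2`, expanding the product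
with these relations gives `G₁ = (3 - AB + 2BA + i(A - B))/4`. So `G₁` fixes every vector fixed
by both swaps (in particular the symmetric sector), and it respects the Hamming weight of basis
configurations: permuting sites permutes the weight-1 and the weight-2 configurations as it
permutes `Fin 3`, and fixes the two constant ones. Hence `G₁` is the identity on weights 0 and 3
and acts by the same `3 × 3` matrix on weights 1 and 2, whose characteristic polynomial is
`(x - 1)(x² - 5x/4 + 1)`. Unitarity holds factor by factor, and `det G₁` is read off the
characteristic polynomial. -/

open Polynomial Real

section Permutations

variable {α ι κ R : Type*}

def sitePerm (β : Type*) : Equiv.Perm α →* Equiv.Perm (α → β) where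
  toFun σ := σ.arrowCongr (Equiv.refl β)
  map_one' := rfl
  map_mul' _ _ := rfl

@[simp]
lemma sitePerm_apply (β : Type*) (σ : Equiv.Perm α) (x : α → β) :
    sitePerm β σ x = x ∘ σ.symm := rfl

lemma Matrix.submatrix_permMatrix [DecidableEq ι] [DecidableEq κ] [Zero R] [One R]
    (τ : Equiv.Perm κ) (e : ι ≃ κ) :
    (τ.permMatrix R).submatrix e e = (e.symm.permCongr τ).permMatrix R := by
  ext p q
  simp [PEquiv.toMatrix_apply, Equiv.symm_apply_eq]

lemma Matrix.permMatrix_sumCongr [DecidableEq ι] [DecidableEq κ] [Zero R] [One R]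
    (σ : Equiv.Perm ι) (τ : Equiv.Perm κ) :
    (σ.sumCongr τ).permMatrix R = fromBlocks (σ.permMatrix R) 0 0 (τ.permMatrix R) := by
  ext (p | p) (q | q) <;> simp [PEquiv.toMatrix_apply]

end Permutations

section Swap

variable {n : ℕ}

lemma swapM_eq_permMatrix (i j : Fin n) :
    swapM n i j = (sitePerm (Fin 2) (Equiv.swap i j)).permMatrix ℂ := by
  ext x y
  simp only [swapM, PEquiv.toMatrix_apply, Equiv.toPEquiv_apply, Option.mem_def,
    Option.some.injEq, sitePerm_apply, Equiv.symm_swap]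
  exact if_congr ⟨fun h => by funext k; simp [h], fun h => by funext k; simp [← h]⟩ rfl rfl

lemma swapM_mul_self (i j : Fin n) : swapM n i j * swapM n i j = 1 := by
  rw [swapM_eq_permMatrix, ← permMatrix_mul, ← map_mul, Equiv.swap_mul_self, map_one,
    permMatrix_one]

lemma swapM_braid {i j k : Fin n} (hij : i ≠ j) (hjk : j ≠ k) (hik : i ≠ k) :
    swapM n i j * swapM n j k * swapM n i j = swapM n j k * swapM n i j * swapM n j k := by
  have h : Equiv.swap i j * Equiv.swap j k * Equiv.swap i j
      = Equiv.swap j k * Equiv.swap i j * Equiv.swap j k := by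
    rw [Equiv.swap_mul_swap_mul_swap hij hik, Equiv.swap_comm i j,
      Equiv.swap_comm j k, Equiv.swap_mul_swap_mul_swap hjk.symm hik.symm, Equiv.swap_comm]
  simp only [swapM_eq_permMatrix, ← permMatrix_mul, ← map_mul, ← mul_assoc, h]

lemma star_swapM (i j : Fin n) : star (swapM n i j) = swapM n i j := by
  rw [swapM_eq_permMatrix, star_eq_conjTranspose, conjTranspose_permMatrix, ← map_inv,
    Equiv.swap_inv]

lemma swapM_mulVec_of_perm_invariant (i j : Fin n) {v : (Fin n → Fin 2) → ℂ}
    (hv : ∀ (σ : Equiv.Perm (Fin n)) (x : Fin n → Fin 2), v (x ∘ σ) = v x) :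
    swapM n i j *ᵥ v = v := by
  ext x
  rw [swapM_eq_permMatrix, permMatrix_mulVec]
  exact hv _ x

end Swap

lemma smul_one_add_I_mul_smul_mem_unitary {R : Type*} [Ring R] [StarRing R] [Algebra ℂ R]
    [StarModule ℂ R] {c s : ℝ} (hcs : c ^ 2 + s ^ 2 = 1) {S : R} (hS : star S = S)
    (hSS : S * S = 1) :
    (c : ℂ) • (1 : R) + (I * s) • S ∈ unitary R := by
  have hcs' : (c : ℂ) ^ 2 + (s : ℂ) ^ 2 = 1 := by exact_mod_cast hcs
  have hstar : star ((c : ℂ) • (1 : R) + (I * s) • S) = (c : ℂ) • (1 : R) - (I * s) • S := by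
    simp [star_smul, hS, sub_eq_add_neg]
  rw [Unitary.mem_iff, hstar]
  constructor <;>
  · simp only [add_mul, mul_add, sub_mul, mul_sub, smul_mul_assoc, mul_smul_comm, one_mul,
      mul_one, hSS]
    linear_combination (norm := module) (hcs' - (s : ℂ) ^ 2 * I_sq) • (1 : R)

lemma exch_mem_unitaryGroup (n : ℕ) (θ : ℝ) (i j : Fin n) :
    exch n θ i j ∈ Matrix.unitaryGroup (Fin n → Fin 2) ℂ :=
  smul_one_add_I_mul_smul_mem_unitary (Real.cos_sq_add_sin_sq θ) (star_swapM i j)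
    (swapM_mul_self i j)

lemma exch_pi_div_four (n : ℕ) (i j : Fin n) :
    exch n (π / 4) i j = ((√2 / 2 : ℝ) : ℂ) • (1 + I • swapM n i j) := by
  rw [exch, Real.cos_pi_div_four, Real.sin_pi_div_four]
  module

lemma exch_three_pi_div_four (n : ℕ) (i j : Fin n) :
    exch n (3 * π / 4) i j = ((√2 / 2 : ℝ) : ℂ) • (-1 + I • swapM n i j) := by
  rw [exch, show 3 * π / 4 = π - π / 4 by ring, Real.cos_pi_sub, Real.sin_pi_sub,
    Real.cos_pi_div_four, Real.sin_pi_div_four]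
  push_cast
  module

section Word

variable {R S : Type*} [Ring R] [Algebra ℂ R] [Ring S] [Algebra ℂ S]

def g₁Word (A B : R) : R :=
  (1 / 4 : ℂ) • ((3 : ℂ) • 1 - A * B + (2 : ℂ) • (B * A) + I • (A - B))

lemma exchange_product_eq_smul_g₁Word {A B : R} (hA : A * A = 1) (hB : B * B = 1)
    (hAB : A * B * A = B * A * B) :
    (1 + I • A) * (1 + I • B) * (-1 + I • A) * (-1 + I • B) = (4 : ℂ) • g₁Word A B := by
  have hA' (X : R) : X * A * A = X := by rw [mul_assoc, hA, mul_one]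
  have hB' (X : R) : X * B * B = X := by rw [mul_assoc, hB, mul_one]
  have hABAB : A * B * A * B = B * A := by rw [hAB, hB']
  simp only [g₁Word, add_mul, mul_add, smul_mul_assoc, mul_smul_comm, smul_add, smul_neg,
    smul_smul, one_mul, mul_one, neg_mul, mul_neg, hA, hB, hB', hAB.symm, hABAB, I_mul_I]
  module

lemma map_g₁Word {F : Type*} [FunLike F R S] [AlgHomClass F ℂ R S] (f : F) (A B : R) :
    f (g₁Word A B) = g₁Word (f A) (f B) := by
  simp [g₁Word]

lemma g₁Word_one_one : g₁Word (1 : R) 1 = 1 := by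
  rw [g₁Word, one_mul]
  module

end Word

lemma G₁_eq_g₁Word : G₁ = g₁Word (swapM 3 0 1) (swapM 3 1 2) := by
  have hscale : (((√2 / 2 : ℝ) : ℂ) * (√2 / 2 : ℝ) * (√2 / 2 : ℝ) * (√2 / 2 : ℝ)) * 4 = 1 := by
    have h2 : √2 * √2 = 2 := Real.mul_self_sqrt (by norm_num)
    have h : (√2 / 2) * (√2 / 2) * (√2 / 2) * (√2 / 2) * 4 = 1 := by
      linear_combination (√2 * √2 + 2) / 4 * h2
    exact_mod_cast h
  rw [G₁, exch_pi_div_four, exch_pi_div_four, exch_three_pi_div_four, exch_three_pi_div_four]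
  simp only [smul_mul_smul_comm]
  rw [exchange_product_eq_smul_g₁Word (swapM_mul_self 0 1) (swapM_mul_self 1 2)
    (swapM_braid (by decide) (by decide) (by decide)), smul_smul, hscale, one_smul]

def sectorEquiv : (Fin 3 ⊕ Fin 3) ⊕ Fin 2 ≃ (Fin 3 → Fin 2) :=
  Equiv.ofBijective
    (Sum.elim (Sum.elim (fun k => Function.update 0 k 1) (fun k => Function.update 1 k 0))
      (fun b _ => b))
    (by decide)

lemma sitePerm_sectorEquiv (σ : Equiv.Perm (Fin 3)) (p : (Fin 3 ⊕ Fin 3) ⊕ Fin 2) :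
    sitePerm (Fin 2) σ (sectorEquiv p)
      = sectorEquiv (Equiv.sumCongr (Equiv.sumCongr σ σ) 1 p) := by
  rcases p with (k | k) | b
  · simp [sectorEquiv, Function.update_comp_equiv]
  · simp [sectorEquiv, Function.update_comp_equiv]
  · rfl

lemma sitePerm_permMatrix_submatrix_sectorEquiv (σ : Equiv.Perm (Fin 3)) :
    ((sitePerm (Fin 2) σ).permMatrix ℂ).submatrix sectorEquiv sectorEquiv
      = fromBlocks (fromBlocks (σ.permMatrix ℂ) 0 0 (σ.permMatrix ℂ)) 0 0 1 := by
  have h : sectorEquiv.symm.permCongr (sitePerm (Fin 2) σ)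
      = Equiv.sumCongr (Equiv.sumCongr σ σ) 1 := by
    ext p : 1
    rw [Equiv.permCongr_apply, Equiv.symm_symm, sitePerm_sectorEquiv, Equiv.symm_apply_apply]
  rw [submatrix_permMatrix, h, permMatrix_sumCongr, permMatrix_sumCongr, permMatrix_one]

lemma g₁Word_fromBlocks {m n : Type*} [Fintype m] [Fintype n] [DecidableEq m] [DecidableEq n]
    (A₁ B₁ : Matrix m m ℂ) (A₂ B₂ : Matrix n n ℂ) :
    g₁Word (fromBlocks A₁ 0 0 A₂) (fromBlocks B₁ 0 0 B₂)
      = fromBlocks (g₁Word A₁ B₁) 0 0 (g₁Word A₂ B₂) := by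
  simp [g₁Word, sub_eq_add_neg, fromBlocks_multiply, fromBlocks_smul, fromBlocks_add,
    fromBlocks_neg, ← fromBlocks_one]

def G₁Sector : Matrix (Fin 3) (Fin 3) ℂ :=
  g₁Word ((Equiv.swap (0 : Fin 3) 1).permMatrix ℂ) ((Equiv.swap (1 : Fin 3) 2).permMatrix ℂ)

lemma G₁Sector_eq :
    G₁Sector = (1 / 4 : ℂ) • !![3 - I, 2 + I, -1; -1 + I, 3, 2 - I; 2, -1 - I, 3 + I] := by
  ext i j
  fin_cases i <;> fin_cases j <;>
    simp [G₁Sector, g₁Word, mul_apply, Fin.sum_univ_three, PEquiv.toMatrix_apply,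
      Equiv.swap_apply_def] <;> ring

lemma G₁Sector_charpoly : G₁Sector.charpoly = (X - 1) * (X ^ 2 - C (5 / 4 : ℂ) * X + 1) := by
  refine Polynomial.funext fun x => ?_
  rw [G₁Sector_eq, eval_charpoly, det_fin_three]
  simp only [eval_mul, eval_sub, eval_add, eval_pow, eval_X, eval_C, eval_one, scalar_apply,
    Matrix.sub_apply, Matrix.smul_apply, diagonal_apply, of_apply, cons_val', cons_val,
    Fin.reduceEq, ite_true, ite_false, smul_eq_mul]
  linear_combination (3 / 16 * (1 - x)) * I_sq

lemma G₁_submatrix_sectorEquiv :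
    G₁.submatrix sectorEquiv sectorEquiv
      = fromBlocks (fromBlocks G₁Sector 0 0 G₁Sector) 0 0 1 := by
  have h := map_g₁Word (reindexAlgEquiv ℂ ℂ sectorEquiv.symm) (swapM 3 0 1) (swapM 3 1 2)
  simp only [coe_reindexAlgEquiv, reindex_apply, Equiv.symm_symm] at h
  rw [G₁_eq_g₁Word, h, swapM_eq_permMatrix, swapM_eq_permMatrix,
    sitePerm_permMatrix_submatrix_sectorEquiv, sitePerm_permMatrix_submatrix_sectorEquiv,
    g₁Word_fromBlocks, g₁Word_fromBlocks, g₁Word_one_one]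
  rfl

lemma G₁_charpoly_eq : G₁.charpoly = (X - 1) ^ 4 * (X ^ 2 - C (5 / 4 : ℂ) * X + 1) ^ 2 := by
  rw [← charpoly_reindex sectorEquiv.symm, reindex_apply, Equiv.symm_symm,
    G₁_submatrix_sectorEquiv, charpoly_fromBlocks_zero₁₂, charpoly_fromBlocks_zero₁₂,
    G₁Sector_charpoly, charpoly_one, Fintype.card_fin]
  ring

lemma g₁Word_mulVec_of_mulVec_eq_self {m : Type*} [Fintype m] [DecidableEq m]
    {A B : Matrix m m ℂ} {v : m → ℂ} (hA : A *ᵥ v = v) (hB : B *ᵥ v = v) :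
    g₁Word A B *ᵥ v = v := by
  simp only [g₁Word, smul_mulVec, add_mulVec, sub_mulVec, ← mulVec_mulVec, one_mulVec, hA, hB]
  module

open Polynomial in
/-- The characteristic polynomial of `G₁` is `(x-1)⁴(x² - (5/4)x + 1)²`; in particular
`G₁` is unitary with determinant 1 and acts trivially on the totally symmetric sector. -/
theorem G₁_charpoly :
    G₁.charpoly = (X - 1) ^ 4 * (X ^ 2 - C (5 / 4 : ℂ) * X + 1) ^ 2
    ∧ G₁ ∈ Matrix.unitaryGroup (Fin 3 → Fin 2) ℂ
    ∧ G₁.det = 1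
    ∧ ∀ v : (Fin 3 → Fin 2) → ℂ,
        (∀ (σ : Equiv.Perm (Fin 3)) (x : Fin 3 → Fin 2), v (x ∘ σ) = v x) →
        G₁ *ᵥ v = v := by
  refine ⟨G₁_charpoly_eq, ?_, ?_, fun v hv => ?_⟩
  · rw [G₁]
    repeat' apply mul_mem
    all_goals exact exch_mem_unitaryGroup 3 _ _ _
  · rw [det_eq_sign_charpoly_coeff, G₁_charpoly_eq, coeff_zero_eq_eval_zero]
    norm_num
  · rw [G₁_eq_g₁Word]
    exact g₁Word_mulVec_of_mulVec_eq_self (swapM_mulVec_of_perm_invariant 0 1 hv)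
      (swapM_mulVec_of_perm_invariant 1 2 hv)
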